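/- arXiv:2106.08229 — 11 statements merged into one kernel-verified Lean document; each statement's English description precedes it below -/
import Mathlib

section
/- The MICo update operator T^π_M, defined on real-valued functions U on X×X by (T^π_M U)(x,y) = |r^π_x - r^π_y| + γ E_{x'∼P^π_x, y'∼P^π_y}[U(x',y')], is a γ-contraction with respect to the sup norm. -/
open Finset

/-- The MICo update operator is a γ-contraction in sup norm: if K bounds the sup distance
between U and U', then γ·K bounds the sup distance between T U and T U'. -/
theorem mico_contraction {X : Type*} [Fintype X]
    (γ : ℝ) (hγ0 : 0 ≤ γ) (hγ1 : γ < 1)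
    (r : X → ℝ) (P : X → X → ℝ)
    (hP0 : ∀ x x', 0 ≤ P x x') (hP1 : ∀ x, ∑ x', P x x' = 1)
    (T : (X → X → ℝ) → (X → X → ℝ))
    (hT : ∀ U x y, T U x y = |r x - r y| + γ * ∑ x', ∑ y', P x x' * P y y' * U x' y')
    (U U' : X → X → ℝ) (K : ℝ) (hK : ∀ x y, |U x y - U' x y| ≤ K) :
    ∀ x y, |T U x y - T U' x y| ≤ γ * K := by
  intro x y
  rw [hT, hT]
  have heq : |r x - r y| + γ * ∑ x', ∑ y', P x x' * P y y' * U x' y'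
      - (|r x - r y| + γ * ∑ x', ∑ y', P x x' * P y y' * U' x' y')
      = γ * ∑ x', ∑ y', P x x' * P y y' * (U x' y' - U' x' y') := by
    rw [show ∀ a b : ℝ, |r x - r y| + a - (|r x - r y| + b) = a - b from fun a b => by ring,
      ← mul_sub, ← Finset.sum_sub_distrib]
    congr 1
    apply Finset.sum_congr rfl
    intro i _
    rw [← Finset.sum_sub_distrib]
    apply Finset.sum_congr rfl
    intro j _
    ring
  rw [heq, abs_mul, abs_of_nonneg hγ0]
  apply mul_le_mul_of_nonneg_left _ hγ0
  calc |∑ x', ∑ y', P x x' * P y y' * (U x' y' - U' x' y')|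
      ≤ ∑ x', |∑ y', P x x' * P y y' * (U x' y' - U' x' y')| :=
        Finset.abs_sum_le_sum_abs _ _
    _ ≤ ∑ x', ∑ y', |P x x' * P y y' * (U x' y' - U' x' y')| := by
        apply Finset.sum_le_sum; intro i _; exact Finset.abs_sum_le_sum_abs _ _
    _ ≤ ∑ x', ∑ y', P x x' * P y y' * K := by
        apply Finset.sum_le_sum; intro i _
        apply Finset.sum_le_sum; intro j _
        rw [abs_mul, abs_of_nonneg (mul_nonneg (hP0 x i) (hP0 y j))]
        exact mul_le_mul_of_nonneg_left (hK i j) (mul_nonneg (hP0 x i) (hP0 y j))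
    _ = K := by
        have h1 : ∑ j, P y j * K = K := by rw [← Finset.sum_mul, hP1, one_mul]
        simp_rw [mul_assoc, ← Finset.mul_sum, h1, ← Finset.sum_mul, hP1, one_mul]
end

section
/- The MICo operator T^π_M has a unique fixed point U^π in the space of real-valued functions on X×X, and repeated application of T^π_M to any initial function converges to U^π. -/
open Finset

/-- The MICo operator has a unique fixed point, and iterating it from any initial
function converges to this fixed point. -/
theorem mico_unique_fixed_point {X : Type*} [Fintype X]
    (γ : ℝ) (hγ0 : 0 ≤ γ) (hγ1 : γ < 1)
    (r : X → ℝ) (P : X → X → ℝ)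
    (hP0 : ∀ x x', 0 ≤ P x x') (hP1 : ∀ x, ∑ x', P x x' = 1)
    (T : (X → X → ℝ) → (X → X → ℝ))
    (hT : ∀ U x y, T U x y = |r x - r y| + γ * ∑ x', ∑ y', P x x' * P y y' * U x' y') :
    ∃ Uπ : X → X → ℝ, T Uπ = Uπ ∧ (∀ U : X → X → ℝ, T U = U → U = Uπ) ∧
      ∀ U0 : X → X → ℝ, ∀ x y : X,
        Filter.Tendsto (fun n => (T^[n] U0) x y) Filter.atTop (nhds (Uπ x y)) := by
  cases isEmpty_or_nonempty X with
  | inl h =>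
    refine ⟨fun x _ => 0, ?_, ?_, ?_⟩
    · funext x; exact h.elim x
    · intro U _; funext x; exact h.elim x
    · intro U0 x; exact h.elim x
  | inr h =>
    have key : ∀ U V : X → X → ℝ, dist (T U) (T V) ≤ γ * dist U V := by
      intro U V
      have hd0 : (0:ℝ) ≤ dist U V := dist_nonneg
      rw [dist_pi_le_iff (by positivity)]
      intro x
      rw [dist_pi_le_iff (by positivity)]
      intro y
      rw [Real.dist_eq, hT, hT]
      have hdiff : |r x - r y| + γ * (∑ x', ∑ y', P x x' * P y y' * U x' y') -
          (|r x - r y| + γ * ∑ x', ∑ y', P x x' * P y y' * V x' y')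
          = γ * ∑ x', ∑ y', P x x' * P y y' * (U x' y' - V x' y') := by
        simp [Finset.mul_sum, mul_sub, Finset.sum_sub_distrib]
      rw [hdiff, abs_mul, abs_of_nonneg hγ0]
      gcongr
      calc |∑ x', ∑ y', P x x' * P y y' * (U x' y' - V x' y')|
          ≤ ∑ x', |∑ y', P x x' * P y y' * (U x' y' - V x' y')| :=
            Finset.abs_sum_le_sum_abs _ _
        _ ≤ ∑ x', ∑ y', |P x x' * P y y' * (U x' y' - V x' y')| := by
            gcongr with x' _; exact Finset.abs_sum_le_sum_abs _ _
        _ ≤ ∑ x', ∑ y', P x x' * P y y' * dist U V := by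
            gcongr with x' _ y' _
            rw [abs_mul, abs_of_nonneg (mul_nonneg (hP0 _ _) (hP0 _ _))]
            gcongr
            · exact mul_nonneg (hP0 _ _) (hP0 _ _)
            · calc |U x' y' - V x' y'| = dist (U x' y') (V x' y') := (Real.dist_eq _ _).symm
                _ ≤ dist (U x') (V x') := dist_le_pi_dist _ _ _
                _ ≤ dist U V := dist_le_pi_dist _ _ _
        _ = dist U V := by
            simp only [← Finset.sum_mul, ← Finset.mul_sum, hP1]
            simp [hP1]
    have hlip : LipschitzWith ⟨γ, hγ0⟩ T := LipschitzWith.of_dist_le_mul key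
    have hcontr : ContractingWith ⟨γ, hγ0⟩ T := ⟨by exact_mod_cast hγ1, hlip⟩
    refine ⟨hcontr.fixedPoint T, ?_, ?_, ?_⟩
    · exact hcontr.fixedPoint_isFixedPt
    · intro U hU
      exact hcontr.fixedPoint_unique hU
    · intro U0 x y
      have := hcontr.tendsto_iterate_fixedPoint U0
      exact ((continuous_apply y).tendsto _).comp (((continuous_apply x).tendsto _).comp this)
end

section
/- For any policy π and all states x, y ∈ X, the difference of values is bounded by the MICo distance: |V^π(x) - V^π(y)| ≤ U^π(x,y). -/
open Finset

/-- The MICo distance upper bounds value differences: |V^π(x) - V^π(y)| ≤ U^π(x,y). -/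
theorem mico_bounds_value_difference {X : Type*} [Fintype X]
    (γ : ℝ) (hγ0 : 0 ≤ γ) (hγ1 : γ < 1)
    (r : X → ℝ) (P : X → X → ℝ)
    (hP0 : ∀ x x', 0 ≤ P x x') (hP1 : ∀ x, ∑ x', P x x' = 1)
    (V : X → ℝ) (hV : ∀ x, V x = r x + γ * ∑ x', P x x' * V x')
    (U : X → X → ℝ)
    (hU : ∀ x y, U x y = |r x - r y| + γ * ∑ x', ∑ y', P x x' * P y y' * U x' y') :
    ∀ x y : X, |V x - V y| ≤ U x y := by
  intro x y
  have hne : (Finset.univ : Finset (X × X)).Nonempty := ⟨(x, y), mem_univ _⟩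
  set D : X × X → ℝ := fun p => |V p.1 - V p.2| - U p.1 p.2 with hD
  obtain ⟨p, _, hmax⟩ := Finset.exists_max_image univ D hne
  set M := D p with hM
  -- key algebraic identity
  have e : ∀ a b : X, (∑ x', ∑ y', P a x' * P b y' * (V x' - V y'))
      = (∑ x', P a x' * V x') - (∑ y', P b y' * V y') := by
    intro a b
    have h1 : ∀ x', (∑ y', P a x' * P b y' * (V x' - V y'))
        = P a x' * V x' - P a x' * (∑ y', P b y' * V y') := by
      intro x'
      calc ∑ y', P a x' * P b y' * (V x' - V y')
          = ∑ y', (P a x' * V x' * P b y' - P a x' * (P b y' * V y')) := by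
            apply Finset.sum_congr rfl; intros; ring
        _ = P a x' * V x' * (∑ y', P b y') - P a x' * ∑ y', P b y' * V y' := by
            rw [Finset.sum_sub_distrib, ← Finset.mul_sum, ← Finset.mul_sum]
        _ = P a x' * V x' - P a x' * ∑ y', P b y' * V y' := by rw [hP1 b]; ring
    rw [Finset.sum_congr rfl (fun x' _ => h1 x'), Finset.sum_sub_distrib,
      ← Finset.sum_mul, hP1 a, one_mul]
  have key : ∀ a b : X, D (a, b) ≤ γ * M := by
    intro a b
    have h1 : V a - V b = (r a - r b) + γ * ∑ x', ∑ y', P a x' * P b y' * (V x' - V y') := by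
      rw [e a b, hV a, hV b]; ring
    have h2 : |V a - V b| ≤ |r a - r b| + γ * ∑ x', ∑ y', P a x' * P b y' * |V x' - V y'| := by
      rw [h1]
      refine le_trans (abs_add_le _ _) ?_
      gcongr
      rw [abs_mul, abs_of_nonneg hγ0]
      gcongr
      refine le_trans (Finset.abs_sum_le_sum_abs _ _) ?_
      refine Finset.sum_le_sum (fun x' _ => ?_)
      refine le_trans (Finset.abs_sum_le_sum_abs _ _) ?_
      refine Finset.sum_le_sum (fun y' _ => ?_)
      rw [abs_mul, abs_mul, abs_of_nonneg (hP0 a x'), abs_of_nonneg (hP0 b y')]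
    have h3 : D (a, b) ≤ γ * ∑ x', ∑ y', P a x' * P b y' * D (x', y') := by
      have := hU a b
      simp only [hD]
      have expand : ∑ x', ∑ y', P a x' * P b y' * (|V x' - V y'| - U x' y')
          = (∑ x', ∑ y', P a x' * P b y' * |V x' - V y'|)
            - ∑ x', ∑ y', P a x' * P b y' * U x' y' := by
        rw [← Finset.sum_sub_distrib]
        refine Finset.sum_congr rfl (fun x' _ => ?_)
        rw [← Finset.sum_sub_distrib]
        refine Finset.sum_congr rfl (fun y' _ => ?_)
        ring
      simp only [expand]
      rw [this]
      nlinarith [h2]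
    refine le_trans h3 ?_
    have hsumM : ∑ x', ∑ y', P a x' * P b y' * M = M := by
      have : ∀ x', ∑ y', P a x' * P b y' * M = P a x' * M := by
        intro x'
        rw [show (∑ y', P a x' * P b y' * M) = P a x' * M * ∑ y', P b y' from ?_, hP1 b, mul_one]
        rw [Finset.mul_sum]; apply Finset.sum_congr rfl; intros; ring
      rw [Finset.sum_congr rfl (fun x' _ => this x'), ← Finset.sum_mul, hP1 a, one_mul]
    have hle : ∑ x', ∑ y', P a x' * P b y' * D (x', y') ≤ ∑ x', ∑ y', P a x' * P b y' * M := by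
      refine Finset.sum_le_sum (fun x' _ => Finset.sum_le_sum (fun y' _ => ?_))
      have := hmax (x', y') (mem_univ _)
      have hpq : 0 ≤ P a x' * P b y' := mul_nonneg (hP0 a x') (hP0 b y')
      nlinarith
    rw [hsumM] at hle
    nlinarith
  have hM0 : M ≤ 0 := by
    have := key p.1 p.2
    simp only [hM] at *
    nlinarith [this]
  have := hmax (x, y) (mem_univ _)
  simp only [hD] at this
  nlinarith [this]
end

section
/- If a symmetric function U: X×X → ℝ satisfies |V^π(x) - V^π(y)| ≤ U(x,y) for all x,y, then |V^π(x) - V^π(y)| ≤ (T^π_M U)(x,y) for all x,y. That is, the set of symmetric upper bounds on value differences is invariant under the MICo operator. -/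
/-!
Subtracting the Bellman equations at `x` and `y`, and averaging under the independent
coupling `P x ⊗ P y` (whose marginals are `P x` and `P y`), gives
`V x - V y = (r x - r y) + γ 𝔼[V x' - V y']`. The triangle inequality and the bound
`|V x' - V y'| ≤ U x' y'` inside the nonnegative average finish the proof.
-/

open Finset

theorem sum_sum_mul_mul_sub {ι κ R : Type*} [Fintype ι] [Fintype κ] [CommRing R]
    (p : ι → R) (q : κ → R) (hp : ∑ i, p i = 1) (hq : ∑ j, q j = 1)
    (f : ι → R) (g : κ → R) :
    ∑ i, ∑ j, p i * q j * (f i - g j) = ∑ i, p i * f i - ∑ j, q j * g j := by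
  have hf : ∑ i, ∑ j, p i * q j * f i = ∑ i, p i * f i := by
    rw [← mul_one (∑ i, p i * f i), ← hq, sum_mul_sum]
    exact sum_congr rfl fun i _ => sum_congr rfl fun j _ => by ring
  have hg : ∑ i, ∑ j, p i * q j * g j = ∑ j, q j * g j := by
    rw [← one_mul (∑ j, q j * g j), ← hp, sum_mul_sum]
    exact sum_congr rfl fun i _ => sum_congr rfl fun j _ => by ring
  simp only [mul_sub, sum_sub_distrib, hf, hg]

theorem abs_sum_sum_mul_le {ι κ : Type*} (s : Finset ι) (t : Finset κ)
    (w g U : ι → κ → ℝ) (hw : ∀ i j, 0 ≤ w i j) (hg : ∀ i j, |g i j| ≤ U i j) :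
    |∑ i ∈ s, ∑ j ∈ t, w i j * g i j| ≤ ∑ i ∈ s, ∑ j ∈ t, w i j * U i j := by
  refine (abs_sum_le_sum_abs _ _).trans <| sum_le_sum fun i _ => ?_
  refine (abs_sum_le_sum_abs _ _).trans <| sum_le_sum fun j _ => ?_
  rw [abs_mul, abs_of_nonneg (hw i j)]
  exact mul_le_mul_of_nonneg_left (hg i j) (hw i j)

theorem bellman_sub_eq {X : Type*} [Fintype X] (γ : ℝ) (r : X → ℝ) (P : X → X → ℝ)
    (hP1 : ∀ x, ∑ x', P x x' = 1) (V : X → ℝ)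
    (hV : ∀ x, V x = r x + γ * ∑ x', P x x' * V x') (x y : X) :
    V x - V y = (r x - r y) + γ * ∑ x', ∑ y', P x x' * P y y' * (V x' - V y') := by
  rw [sum_sum_mul_mul_sub _ _ (hP1 x) (hP1 y), hV x, hV y]
  ring

theorem mico_preserves_value_bound_general {X : Type*} [Fintype X]
    (γ : ℝ) (hγ0 : 0 ≤ γ)
    (r : X → ℝ) (P : X → X → ℝ)
    (hP0 : ∀ x x', 0 ≤ P x x') (hP1 : ∀ x, ∑ x', P x x' = 1)
    (V : X → ℝ) (hV : ∀ x, V x = r x + γ * ∑ x', P x x' * V x')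
    (U : X → X → ℝ)
    (hbound : ∀ x y, |V x - V y| ≤ U x y) :
    ∀ x y : X, |V x - V y| ≤
      |r x - r y| + γ * ∑ x', ∑ y', P x x' * P y y' * U x' y' := by
  intro x y
  rw [bellman_sub_eq γ r P hP1 V hV x y]
  calc |(r x - r y) + γ * ∑ x', ∑ y', P x x' * P y y' * (V x' - V y')|
      ≤ |r x - r y| + γ * |∑ x', ∑ y', P x x' * P y y' * (V x' - V y')| :=
        (abs_add_le _ _).trans_eq (by rw [abs_mul, abs_of_nonneg hγ0])
    _ ≤ |r x - r y| + γ * ∑ x', ∑ y', P x x' * P y y' * U x' y' := by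
        gcongr
        exact abs_sum_sum_mul_le _ _ _ _ _ (fun x' y' => mul_nonneg (hP0 x x') (hP0 y y')) hbound

/-- The set of symmetric upper bounds on value differences is invariant under the
MICo operator. -/
theorem mico_preserves_value_bound {X : Type*} [Fintype X]
    (γ : ℝ) (hγ0 : 0 ≤ γ) (hγ1 : γ < 1)
    (r : X → ℝ) (P : X → X → ℝ)
    (hP0 : ∀ x x', 0 ≤ P x x') (hP1 : ∀ x, ∑ x', P x x' = 1)
    (V : X → ℝ) (hV : ∀ x, V x = r x + γ * ∑ x', P x x' * V x')
    (U : X → X → ℝ)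
    (hsym : ∀ x y, U x y = U y x)
    (hbound : ∀ x y, |V x - V y| ≤ U x y) :
    ∀ x y : X, |V x - V y| ≤
      |r x - r y| + γ * ∑ x', ∑ y', P x x' * P y y' * U x' y' :=
  mico_preserves_value_bound_general γ hγ0 r P hP0 hP1 V hV U hbound
end

section
/- The fixed point U^π of the MICo operator is nonnegative, symmetric, and satisfies the triangle inequality U^π(x,y) ≤ U^π(x,z) + U^π(z,y) for all x,y,z ∈ X; hence U^π is a diffuse metric. -/
open Finset

lemma mico_avg_ge {X : Type*} [Fintype X] {w g : X → ℝ} {m : ℝ}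
    (hw0 : ∀ x, 0 ≤ w x) (hw1 : ∑ x, w x = 1) (hg : ∀ x, m ≤ g x) :
    m ≤ ∑ x, w x * g x := by
  calc m = ∑ x, w x * m := by rw [← Finset.sum_mul, hw1, one_mul]
  _ ≤ ∑ x, w x * g x :=
    Finset.sum_le_sum fun x _ => mul_le_mul_of_nonneg_left (hg x) (hw0 x)

lemma mico_avg_le {X : Type*} [Fintype X] {w g : X → ℝ} {M : ℝ}
    (hw0 : ∀ x, 0 ≤ w x) (hw1 : ∑ x, w x = 1) (hg : ∀ x, g x ≤ M) :
    ∑ x, w x * g x ≤ M := by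
  calc ∑ x, w x * g x ≤ ∑ x, w x * M :=
        Finset.sum_le_sum fun x _ => mul_le_mul_of_nonneg_left (hg x) (hw0 x)
  _ = M := by rw [← Finset.sum_mul, hw1, one_mul]

/-- The MICo distance (the fixed point of the MICo operator) is a diffuse metric:
nonnegative, symmetric, and satisfying the triangle inequality. -/
theorem mico_is_diffuse_metric {X : Type*} [Fintype X]
    (γ : ℝ) (hγ0 : 0 ≤ γ) (hγ1 : γ < 1)
    (r : X → ℝ) (P : X → X → ℝ)
    (hP0 : ∀ x x', 0 ≤ P x x') (hP1 : ∀ x, ∑ x', P x x' = 1)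
    (U : X → X → ℝ)
    (hU : ∀ x y, U x y = |r x - r y| + γ * ∑ x', ∑ y', P x x' * P y y' * U x' y') :
    (∀ x y : X, 0 ≤ U x y) ∧ (∀ x y : X, U x y = U y x) ∧
      (∀ x y z : X, U x y ≤ U x z + U z y) := by
  rcases isEmpty_or_nonempty X with hE | hNE
  · exact ⟨fun x => isEmptyElim x, fun x => isEmptyElim x, fun x => isEmptyElim x⟩
  -- normalized fixed point equation
  have hU' : ∀ x y, U x y = |r x - r y| + γ * ∑ x', P x x' * ∑ y', P y y' * U x' y' := by
    intro x y
    rw [hU x y]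
    congr 2
    apply Finset.sum_congr rfl
    intro x' _
    rw [Finset.mul_sum]
    exact Finset.sum_congr rfl fun y' _ => by ring
  -- Part 1: nonnegativity
  have hnonneg : ∀ x y : X, 0 ≤ U x y := by
    obtain ⟨p, -, hp⟩ := Finset.exists_min_image Finset.univ
      (fun p : X × X => U p.1 p.2) Finset.univ_nonempty
    obtain ⟨a, b⟩ := p
    have hmle : ∀ x y : X, U a b ≤ U x y := fun x y => hp (x, y) (Finset.mem_univ _)
    have hkey : U a b ≤ ∑ x', P a x' * ∑ y', P b y' * U x' y' :=
      mico_avg_ge (hP0 a) (hP1 a) fun x' =>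
        mico_avg_ge (hP0 b) (hP1 b) fun y' => hmle x' y'
    have h0 : 0 ≤ |r a - r b| := abs_nonneg _
    have heq := hU' a b
    have hmge : γ * U a b ≤ U a b := by
      have h := mul_le_mul_of_nonneg_left hkey hγ0
      linarith
    have hm0 : 0 ≤ U a b := by nlinarith
    exact fun x y => le_trans hm0 (hmle x y)
  -- Part 2: symmetry
  have hswap : ∀ a b : X,
      ∑ y', P b y' * ∑ x', P a x' * U y' x' = ∑ x', P a x' * ∑ y', P b y' * U y' x' := by
    intro a b
    simp only [Finset.mul_sum]
    rw [Finset.sum_comm]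
    exact Finset.sum_congr rfl fun x' _ => Finset.sum_congr rfl fun y' _ => by ring
  have hsymm : ∀ x y : X, U x y = U y x := by
    have hD : ∀ a b : X, U a b - U b a
        = γ * ∑ x', P a x' * ∑ y', P b y' * (U x' y' - U y' x') := by
      intro a b
      rw [hU' a b, hU' b a, abs_sub_comm, hswap a b]
      have hd : ∑ x', P a x' * ∑ y', P b y' * (U x' y' - U y' x')
          = (∑ x', P a x' * ∑ y', P b y' * U x' y')
            - ∑ x', P a x' * ∑ y', P b y' * U y' x' := by
        rw [← Finset.sum_sub_distrib]
        exact Finset.sum_congr rfl fun x' _ => by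
          rw [← mul_sub, ← Finset.sum_sub_distrib]
          congr 1
          exact Finset.sum_congr rfl fun y' _ => by ring
      rw [hd]; ring
    obtain ⟨p, -, hp⟩ := Finset.exists_max_image Finset.univ
      (fun p : X × X => U p.1 p.2 - U p.2 p.1) Finset.univ_nonempty
    obtain ⟨a, b⟩ := p
    have hMge : ∀ x y : X, U x y - U y x ≤ U a b - U b a :=
      fun x y => hp (x, y) (Finset.mem_univ _)
    have hkey : ∑ x', P a x' * ∑ y', P b y' * (U x' y' - U y' x') ≤ U a b - U b a :=
      mico_avg_le (hP0 a) (hP1 a) fun x' =>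
        mico_avg_le (hP0 b) (hP1 b) fun y' => hMge x' y'
    have hMle : U a b - U b a ≤ γ * (U a b - U b a) := by
      have h := mul_le_mul_of_nonneg_left hkey hγ0
      have hd := hD a b
      linarith
    have hM0 : U a b - U b a ≤ 0 := by nlinarith
    intro x y
    have h1 : U x y - U y x ≤ 0 := le_trans (hMge x y) hM0
    have h2 : U y x - U x y ≤ 0 := le_trans (hMge y x) hM0
    linarith
  -- Part 3: triangle inequality
  refine ⟨hnonneg, hsymm, ?_⟩
  obtain ⟨p, -, hp⟩ := Finset.exists_min_image Finset.univ
    (fun p : X × X × X => U p.1 p.2.2 + U p.2.2 p.2.1 - U p.1 p.2.1) Finset.univ_nonempty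
  obtain ⟨a, b, c⟩ := p
  set m := U a c + U c b - U a b with hm
  have hmle : ∀ x y z : X, m ≤ U x z + U z y - U x y :=
    fun x y z => hp (x, y, z) (Finset.mem_univ _)
  -- key averaging bound
  have hinner : ∀ x' z' : X,
      m + ∑ y', P b y' * U x' y' ≤ U x' z' + ∑ y', P b y' * U z' y' := by
    intro x' z'
    have h1 : m ≤ ∑ y', P b y' * (U x' z' + U z' y' - U x' y') :=
      mico_avg_ge (hP0 b) (hP1 b) fun y' => hmle x' y' z'
    have h2 : ∑ y', P b y' * (U x' z' + U z' y' - U x' y')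
        = U x' z' + ∑ y', P b y' * U z' y' - ∑ y', P b y' * U x' y' := by
      simp only [mul_add, mul_sub, Finset.sum_add_distrib, Finset.sum_sub_distrib]
      rw [← Finset.sum_mul, hP1 b, one_mul]
    linarith [h1, h2.symm ▸ h1, h2 ▸ h1]
  have hmid : ∀ x' : X,
      m + ∑ y', P b y' * U x' y'
        ≤ (∑ z', P c z' * U x' z') + ∑ z', P c z' * ∑ y', P b y' * U z' y' := by
    intro x'
    have h1 : m + ∑ y', P b y' * U x' y'
        ≤ ∑ z', P c z' * (U x' z' + ∑ y', P b y' * U z' y') :=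
      mico_avg_ge (hP0 c) (hP1 c) fun z' => hinner x' z'
    have h2 : ∑ z', P c z' * (U x' z' + ∑ y', P b y' * U z' y')
        = (∑ z', P c z' * U x' z') + ∑ z', P c z' * ∑ y', P b y' * U z' y' := by
      simp only [mul_add, Finset.sum_add_distrib]
    linarith [h2 ▸ h1]
  have houter : m ≤ (∑ x', P a x' * ∑ z', P c z' * U x' z')
      + (∑ z', P c z' * ∑ y', P b y' * U z' y')
      - ∑ x', P a x' * ∑ y', P b y' * U x' y' := by
    have h1 : m ≤ ∑ x', P a x' *
        ((∑ z', P c z' * U x' z') + (∑ z', P c z' * ∑ y', P b y' * U z' y')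
          - ∑ y', P b y' * U x' y') :=
      mico_avg_ge (hP0 a) (hP1 a) fun x' => by
        have := hmid x'
        linarith
    have h2 : ∑ x', P a x' *
        ((∑ z', P c z' * U x' z') + (∑ z', P c z' * ∑ y', P b y' * U z' y')
          - ∑ y', P b y' * U x' y')
        = (∑ x', P a x' * ∑ z', P c z' * U x' z')
          + (∑ x', P a x' * ((∑ z', P c z' * ∑ y', P b y' * U z' y')))
          - ∑ x', P a x' * ∑ y', P b y' * U x' y' := by
      simp only [mul_add, mul_sub, Finset.sum_add_distrib, Finset.sum_sub_distrib]
    have h3 : ∑ x', P a x' * ((∑ z', P c z' * ∑ y', P b y' * U z' y'))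
        = ∑ z', P c z' * ∑ y', P b y' * U z' y' := by
      rw [← Finset.sum_mul, hP1 a, one_mul]
    linarith [h2 ▸ h1, h3]
  -- conclude m ≥ 0
  have hr : |r a - r b| ≤ |r a - r c| + |r c - r b| := abs_sub_le _ _ _
  have heq : m = (|r a - r c| + |r c - r b| - |r a - r b|)
      + γ * ((∑ x', P a x' * ∑ z', P c z' * U x' z')
        + (∑ z', P c z' * ∑ y', P b y' * U z' y')
        - ∑ x', P a x' * ∑ y', P b y' * U x' y') := by
    rw [hm, hU' a c, hU' c b, hU' a b]; ring
  have hγm : γ * m ≤ m := by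
    rw [heq]
    nlinarith [mul_le_mul_of_nonneg_left houter hγ0, hr]
  have hm0 : 0 ≤ m := by nlinarith
  intro x y z
  have := hmle x y z
  linarith [hnonneg x z, hm0, hmle x y z]
end

section
/- The MICo operator preserves the triangle inequality: if U: X×X → ℝ satisfies U(x,y) ≤ U(x,z) + U(z,y) for all x,y,z, then T^π_M U also satisfies the triangle inequality. -/
open Finset

/-- The MICo operator preserves the triangle inequality. -/
theorem mico_preserves_triangle {X : Type*} [Fintype X]
    (γ : ℝ) (hγ0 : 0 ≤ γ) (hγ1 : γ < 1)
    (r : X → ℝ) (P : X → X → ℝ)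
    (hP0 : ∀ x x', 0 ≤ P x x') (hP1 : ∀ x, ∑ x', P x x' = 1)
    (T : (X → X → ℝ) → (X → X → ℝ))
    (hT : ∀ U x y, T U x y = |r x - r y| + γ * ∑ x', ∑ y', P x x' * P y y' * U x' y')
    (U : X → X → ℝ)
    (htri : ∀ x y z, U x y ≤ U x z + U z y) :
    ∀ x y z : X, T U x y ≤ T U x z + T U z y := by
  intro x y z
  rw [hT, hT, hT]
  have habs : |r x - r y| ≤ |r x - r z| + |r z - r y| := by
    calc |r x - r y| = |(r x - r z) + (r z - r y)| := by ring_nf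
    _ ≤ |r x - r z| + |r z - r y| := abs_add_le _ _
  have key : ∑ x', ∑ y', P x x' * P y y' * U x' y' ≤
      (∑ x', ∑ z', P x x' * P z z' * U x' z') +
      (∑ z', ∑ y', P z z' * P y y' * U z' y') := by
    calc ∑ x', ∑ y', P x x' * P y y' * U x' y'
        = ∑ x', ∑ y', ∑ z', P x x' * P y y' * P z z' * U x' y' := by
          refine Finset.sum_congr rfl fun x' _ => Finset.sum_congr rfl fun y' _ => ?_
          have : ∀ z' : X, P x x' * P y y' * P z z' * U x' y'
              = (P x x' * P y y' * U x' y') * P z z' := fun _ => by ring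
          rw [Finset.sum_congr rfl fun z' _ => this z', ← Finset.mul_sum, hP1, mul_one]
      _ ≤ ∑ x', ∑ y', ∑ z', P x x' * P y y' * P z z' * (U x' z' + U z' y') := by
          refine Finset.sum_le_sum fun x' _ => Finset.sum_le_sum fun y' _ =>
            Finset.sum_le_sum fun z' _ => ?_
          have hnn : 0 ≤ P x x' * P y y' * P z z' :=
            mul_nonneg (mul_nonneg (hP0 _ _) (hP0 _ _)) (hP0 _ _)
          exact mul_le_mul_of_nonneg_left (htri x' y' z') hnn
      _ = (∑ x', ∑ y', ∑ z', P x x' * P y y' * P z z' * U x' z') +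
          (∑ x', ∑ y', ∑ z', P x x' * P y y' * P z z' * U z' y') := by
          simp [mul_add, Finset.sum_add_distrib]
      _ = (∑ x', ∑ z', P x x' * P z z' * U x' z') +
          (∑ z', ∑ y', P z z' * P y y' * U z' y') := by
          congr 1
          · refine Finset.sum_congr rfl fun x' _ => ?_
            rw [Finset.sum_comm]
            refine Finset.sum_congr rfl fun z' _ => ?_
            have : ∀ y' : X, P x x' * P y y' * P z z' * U x' z'
                = (P x x' * P z z' * U x' z') * P y y' := fun _ => by ring
            rw [Finset.sum_congr rfl fun y' _ => this y', ← Finset.mul_sum, hP1, mul_one]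
          · rw [show (∑ z', ∑ y', P z z' * P y y' * U z' y')
                = ∑ y', ∑ z', P z z' * P y y' * U z' y' from Finset.sum_comm]
            rw [Finset.sum_comm]
            refine Finset.sum_congr rfl fun y' _ => ?_
            rw [Finset.sum_comm]
            refine Finset.sum_congr rfl fun z' _ => ?_
            have : ∀ x' : X, P x x' * P y y' * P z z' * U z' y'
                = (P z z' * P y y' * U z' y') * P x x' := fun _ => by ring
            rw [Finset.sum_congr rfl fun x' _ => this x', ← Finset.mul_sum, hP1, mul_one]
  have := mul_le_mul_of_nonneg_left key hγ0
  linarith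
end

section
/- The Łukaszyk–Karmowski distance d_LK(ρ)(μ,ν) = E_{x∼μ, y∼ν}[ρ(x,y)] on probability measures over a finite set X is a diffuse metric whenever ρ is a diffuse metric on X: it is nonnegative, symmetric, and satisfies the triangle inequality d_LK(μ,ν) ≤ d_LK(μ,η) + d_LK(η,ν). -/
open Finset

/-- The Łukaszyk–Karmowski distance is a diffuse metric on probability measures over a
finite set whenever the base distance is a diffuse metric. -/
theorem lk_is_diffuse_metric {X : Type*} [Fintype X]
    (ρ : X → X → ℝ)
    (hρ0 : ∀ x y, 0 ≤ ρ x y) (hρs : ∀ x y, ρ x y = ρ y x)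
    (hρt : ∀ x y z, ρ x y ≤ ρ x z + ρ z y)
    (dLK : (X → ℝ) → (X → ℝ) → ℝ)
    (hd : ∀ μ ν, dLK μ ν = ∑ x, ∑ y, μ x * ν y * ρ x y)
    (μ ν η : X → ℝ)
    (hμ0 : ∀ x, 0 ≤ μ x) (hμ1 : ∑ x, μ x = 1)
    (hν0 : ∀ x, 0 ≤ ν x) (hν1 : ∑ x, ν x = 1)
    (hη0 : ∀ x, 0 ≤ η x) (hη1 : ∑ x, η x = 1) :
    0 ≤ dLK μ ν ∧ dLK μ ν = dLK ν μ ∧ dLK μ ν ≤ dLK μ η + dLK η ν := by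
  refine ⟨?_, ?_, ?_⟩
  · rw [hd]
    exact Finset.sum_nonneg fun x _ => Finset.sum_nonneg fun y _ =>
      mul_nonneg (mul_nonneg (hμ0 x) (hν0 y)) (hρ0 x y)
  · rw [hd, hd, Finset.sum_comm]
    exact Finset.sum_congr rfl fun x _ => Finset.sum_congr rfl fun y _ => by
      rw [hρs]; ring
  · rw [hd, hd, hd]
    have h3 : ∀ x y, ρ x y ≤ ∑ z, η z * (ρ x z + ρ z y) := by
      intro x y
      calc ρ x y = ∑ z, η z * ρ x y := by rw [← Finset.sum_mul, hη1, one_mul]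
        _ ≤ ∑ z, η z * (ρ x z + ρ z y) := Finset.sum_le_sum fun z _ =>
            mul_le_mul_of_nonneg_left (hρt x y z) (hη0 z)
    calc ∑ x, ∑ y, μ x * ν y * ρ x y
        ≤ ∑ x, ∑ y, μ x * ν y * ∑ z, η z * (ρ x z + ρ z y) :=
          Finset.sum_le_sum fun x _ => Finset.sum_le_sum fun y _ =>
            mul_le_mul_of_nonneg_left (h3 x y) (mul_nonneg (hμ0 x) (hν0 y))
      _ = (∑ x, ∑ z, μ x * η z * ρ x z) + ∑ z, ∑ y, η z * ν y * ρ z y := by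
          simp_rw [Finset.mul_sum, mul_add, Finset.sum_add_distrib]
          congr 1
          · refine Finset.sum_congr rfl fun x _ => ?_
            rw [Finset.sum_comm]
            refine Finset.sum_congr rfl fun z _ => ?_
            calc ∑ y, μ x * ν y * (η z * ρ x z)
                = (∑ y, ν y) * (μ x * η z * ρ x z) := by
                  rw [Finset.sum_mul]
                  exact Finset.sum_congr rfl fun y _ => by ring
              _ = μ x * η z * ρ x z := by rw [hν1, one_mul]
          · rw [Finset.sum_comm]
            rw [show (∑ z, ∑ y, η z * ν y * ρ z y) = ∑ y, ∑ z, η z * ν y * ρ z y from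
              Finset.sum_comm]
            refine Finset.sum_congr rfl fun y _ => ?_
            rw [Finset.sum_comm]
            refine Finset.sum_congr rfl fun z _ => ?_
            calc ∑ x, μ x * ν y * (η z * ρ z y)
                = (∑ x, μ x) * (η z * ν y * ρ z y) := by
                  rw [Finset.sum_mul]
                  exact Finset.sum_congr rfl fun x _ => by ring
              _ = η z * ν y * ρ z y := by rw [hμ1, one_mul]
end

section
/- There exists an MDP and states x, y for which the reduced MICo distance fails to upper bound the value difference: in the two-state single-action MDP where y is absorbing with reward 0, x transitions with probability 1/2 each to x and y with reward 1, and γ = 0.9, one has ΠU(x,y) = U(x,y) - U(x,x)/2 - U(y,y)/2 < |V(x) - V(y)|. -/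
open Finset

/-- In the two-state single-action MDP where state 1 is absorbing with reward 0 and
state 0 gives reward 1 and transitions with probability 1/2 each to states 0 and 1
(γ = 0.9), the reduced MICo distance fails to upper bound the value difference. -/
theorem reduced_mico_fails_value_bound
    (r : Fin 2 → ℝ) (hr : r = ![1, 0])
    (P : Fin 2 → Fin 2 → ℝ) (hP : P = ![![1/2, 1/2], ![0, 1]])
    (V : Fin 2 → ℝ)
    (hV : ∀ x, V x = r x + (9/10) * ∑ x', P x x' * V x')
    (U : Fin 2 → Fin 2 → ℝ)
    (hU : ∀ x y, U x y = |r x - r y| + (9/10) * ∑ x', ∑ y', P x x' * P y y' * U x' y') :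
    U 0 1 - U 0 0 / 2 - U 1 1 / 2 < |V 0 - V 1| := by
  subst hr hP
  have hV0 := hV 0
  have hV1 := hV 1
  have hU00 := hU 0 0
  have hU01 := hU 0 1
  have hU10 := hU 1 0
  have hU11 := hU 1 1
  simp [Fin.sum_univ_two, abs_of_nonneg, abs_of_nonpos] at hV0 hV1 hU00 hU01 hU10 hU11 ⊢
  have hv1 : V 1 = 0 := by linarith
  have hv0 : V 0 = 20/11 := by rw [hv1] at hV0; linarith
  have hu11 : U 1 1 = 0 := by linarith
  have hu01 : U 0 1 = 20/11 := by rw [hu11] at hU01; linarith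
  have hu10 : U 1 0 = 20/11 := by rw [hu11] at hU10; linarith
  have hu00 : U 0 0 = 360/341 := by rw [hu11, hu01, hu10] at hU00; linarith
  rw [hv0, hv1, hu00, hu01, hu11]
  rw [abs_of_nonneg (by norm_num)]
  norm_num
end

section
/- For an MDP in which every transition is a deterministic self-loop, and a policy π that deterministically selects action u at state x and action v at state y, the value difference is |V^π(x) - V^π(y)| = |r^u_x - r^v_y|/(1-γ); consequently, if |r^u_x - r^v_y| > max_a |r^a_x - r^a_y|, the bisimulation metric d^∼(x,y) fails to upper bound |V^π(x) - V^π(y)|. -/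
open Finset

/-- In a self-loop MDP, a deterministic policy choosing u at x and v at y has value
difference |r^u_x - r^v_y|/(1-γ); hence when |r^u_x - r^v_y| > max_a |r^a_x - r^a_y|,
the bisimulation metric d∼(x,y) = max_a |r^a_x - r^a_y|/(1-γ) fails to upper bound it. -/
theorem selfloop_value_gap_exceeds_bisim {X A : Type*} [Fintype X] [Fintype A] [Nonempty A]
    (γ : ℝ) (hγ0 : 0 ≤ γ) (hγ1 : γ < 1)
    (r : X → A → ℝ)
    (act : X → A) (V : X → ℝ)
    (hV : ∀ z, V z = r z (act z) + γ * V z)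
    (d : X → X → ℝ)
    (hd : ∀ x y, d x y =
      (Finset.univ.sup' Finset.univ_nonempty fun a => |r x a - r y a|) / (1 - γ))
    (x y : X) (u v : A) (hu : act x = u) (hv : act y = v) :
    |V x - V y| = |r x u - r y v| / (1 - γ) ∧
      ((Finset.univ.sup' Finset.univ_nonempty fun a => |r x a - r y a|) < |r x u - r y v| →
        d x y < |V x - V y|) := by
  have h1 : (0:ℝ) < 1 - γ := by linarith
  have hVz : ∀ z, V z = r z (act z) / (1 - γ) := by
    intro z
    have := hV z
    field_simp
    linarith
  have key : |V x - V y| = |r x u - r y v| / (1 - γ) := by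
    rw [hVz x, hVz y, hu, hv, div_sub_div_same, abs_div, abs_of_pos h1]
  refine ⟨key, fun h => ?_⟩
  rw [hd, key]
  gcongr
end

section
/- The bisimulation metric upper bounds optimal value differences: |V*(x) - V*(y)| ≤ d^∼(x,y) for all states x, y. -/
open Finset

/-- The Kantorovich (Wasserstein) distance with base cost d between two probability
vectors on a finite set, as the infimum of coupling costs. -/
noncomputable def Wass {X : Type*} [Fintype X] (d : X → X → ℝ) (μ ν : X → ℝ) : ℝ :=
  sInf {c : ℝ | ∃ κ : X → X → ℝ, (∀ x y, 0 ≤ κ x y) ∧ (∀ x, ∑ y, κ x y = μ x) ∧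
    (∀ y, ∑ x, κ x y = ν y) ∧ c = ∑ x, ∑ y, κ x y * d x y}

lemma wass_key {X : Type*} [Fintype X] (d : X → X → ℝ) (V : X → ℝ) (μ ν : X → ℝ)
    (hd0 : ∀ x y, 0 ≤ d x y)
    (hμ0 : ∀ x, 0 ≤ μ x) (hν0 : ∀ x, 0 ≤ ν x) (hμ1 : ∑ x, μ x = 1) (hν1 : ∑ x, ν x = 1)
    (M : ℝ) (hM : ∀ x y, V x - V y ≤ d x y + M) :
    ∑ x, μ x * V x - ∑ y, ν y * V y ≤ Wass d μ ν + M := by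
  have key : ∀ ε > 0, ∑ x, μ x * V x - ∑ y, ν y * V y ≤ (Wass d μ ν + M) + ε := by
    intro ε hε
    set S : Set ℝ := {c : ℝ | ∃ κ : X → X → ℝ, (∀ x y, 0 ≤ κ x y) ∧ (∀ x, ∑ y, κ x y = μ x) ∧
      (∀ y, ∑ x, κ x y = ν y) ∧ c = ∑ x, ∑ y, κ x y * d x y} with hS
    have hne : S.Nonempty := by
      refine ⟨∑ x, ∑ y, (μ x * ν y) * d x y, fun x y => μ x * ν y, ?_, ?_, ?_, rfl⟩
      · exact fun x y => mul_nonneg (hμ0 x) (hν0 y)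
      · intro x; rw [← Finset.mul_sum, hν1, mul_one]
      · intro y; rw [← Finset.sum_mul, hμ1, one_mul]
    have hlt : Wass d μ ν < Wass d μ ν + ε := by linarith
    obtain ⟨c, hcS, hc⟩ := exists_lt_of_csInf_lt hne hlt
    obtain ⟨κ, hκ0, hκμ, hκν, hcval⟩ := hcS
    have hκ1 : ∑ x, ∑ y, κ x y = 1 := by
      rw [Finset.sum_congr rfl (fun x _ => hκμ x), hμ1]
    have h1 : ∑ x, μ x * V x = ∑ x, ∑ y, κ x y * V x := by
      refine Finset.sum_congr rfl fun x _ => ?_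
      rw [← hκμ x, Finset.sum_mul]
    have h2 : ∑ y, ν y * V y = ∑ x, ∑ y, κ x y * V y := by
      rw [Finset.sum_comm]
      refine Finset.sum_congr rfl fun y _ => ?_
      rw [← hκν y, Finset.sum_mul]
    rw [h1, h2, ← Finset.sum_sub_distrib]
    have : ∑ x, (∑ y, κ x y * V x - ∑ y, κ x y * V y)
        = ∑ x, ∑ y, κ x y * (V x - V y) := by
      refine Finset.sum_congr rfl fun x _ => ?_
      rw [← Finset.sum_sub_distrib]
      exact Finset.sum_congr rfl fun y _ => by ring
    rw [this]
    have hb : ∑ x, ∑ y, κ x y * (V x - V y) ≤ ∑ x, ∑ y, κ x y * (d x y + M) := by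
      refine Finset.sum_le_sum fun x _ => Finset.sum_le_sum fun y _ => ?_
      exact mul_le_mul_of_nonneg_left (hM x y) (hκ0 x y)
    have heq : ∑ x, ∑ y, κ x y * (d x y + M) = c + M := by
      have : ∑ x, ∑ y, κ x y * (d x y + M)
          = (∑ x, ∑ y, κ x y * d x y) + (∑ x, ∑ y, κ x y) * M := by
        rw [Finset.sum_mul, ← Finset.sum_add_distrib]
        refine Finset.sum_congr rfl fun x _ => ?_
        rw [Finset.sum_mul, ← Finset.sum_add_distrib]
        exact Finset.sum_congr rfl fun y _ => by ring
      rw [this, hκ1, one_mul, ← hcval]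
    rw [heq] at hb
    have : c + M ≤ Wass d μ ν + ε + M := by
      have : c ≤ Wass d μ ν + ε := le_of_lt hc
      linarith
    linarith
  exact le_of_forall_pos_le_add key

/-- The bisimulation metric upper bounds optimal value differences:
|V*(x) - V*(y)| ≤ d∼(x,y). -/
theorem bisim_bounds_optimal_values {X A : Type*} [Fintype X] [Fintype A] [Nonempty A]
    (γ : ℝ) (hγ0 : 0 ≤ γ) (hγ1 : γ < 1)
    (r : X → A → ℝ) (P : X → A → X → ℝ)
    (hP0 : ∀ x a x', 0 ≤ P x a x') (hP1 : ∀ x a, ∑ x', P x a x' = 1)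
    (V : X → ℝ)
    (hV : ∀ x, V x = Finset.univ.sup' Finset.univ_nonempty
      fun a => r x a + γ * ∑ x', P x a x' * V x')
    (d : X → X → ℝ)
    (hd0 : ∀ x y, 0 ≤ d x y) (hds : ∀ x y, d x y = d y x)
    (hdt : ∀ x y z, d x y ≤ d x z + d z y)
    (hfix : ∀ x y, d x y = Finset.univ.sup' Finset.univ_nonempty
      fun a => |r x a - r y a| + γ * Wass d (P x a) (P y a)) :
    ∀ x y : X, |V x - V y| ≤ d x y := by
  intro x₀ y₀
  haveI : Nonempty X := ⟨x₀⟩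
  set f : X × X → ℝ := fun p => |V p.1 - V p.2| - d p.1 p.2 with hf
  set M : ℝ := (Finset.univ : Finset (X × X)).sup' Finset.univ_nonempty f with hMdef
  have hMb : ∀ x y : X, |V x - V y| - d x y ≤ M := fun x y =>
    Finset.le_sup' f (Finset.mem_univ (x, y))
  have key : ∀ x y : X, V x - V y ≤ d x y + γ * M := by
    intro x y
    have hex : ∃ a : A, a ∈ (Finset.univ : Finset A) ∧
        (Finset.univ : Finset A).sup' Finset.univ_nonempty
          (fun a : A => r x a + γ * ∑ x', P x a x' * V x')
        = r x a + γ * ∑ x', P x a x' * V x' :=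
      Finset.exists_mem_eq_sup' Finset.univ_nonempty _
    obtain ⟨a, _, ha⟩ := hex
    have hVx : V x = r x a + γ * ∑ x', P x a x' * V x' := by rw [hV x, ha]
    have hVy : r y a + γ * ∑ x', P y a x' * V x' ≤ V y := by
      rw [hV y]
      exact Finset.le_sup' (fun a : A => r y a + γ * ∑ x', P y a x' * V x')
        (Finset.mem_univ a)
    have hw : ∑ x', P x a x' * V x' - ∑ x', P y a x' * V x'
        ≤ Wass d (P x a) (P y a) + M := by
      refine wass_key d V (P x a) (P y a) hd0 (hP0 x a) (hP0 y a) (hP1 x a) (hP1 y a) M ?_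
      intro u v
      have := hMb u v
      have habs : V u - V v ≤ |V u - V v| := le_abs_self _
      linarith
    have hda : |r x a - r y a| + γ * Wass d (P x a) (P y a) ≤ d x y := by
      rw [hfix x y]
      exact Finset.le_sup' (fun a : A => |r x a - r y a| + γ * Wass d (P x a) (P y a))
        (Finset.mem_univ a)
    have hra : r x a - r y a ≤ |r x a - r y a| := le_abs_self _
    have hmul : γ * (∑ x', P x a x' * V x' - ∑ x', P y a x' * V x')
        ≤ γ * (Wass d (P x a) (P y a) + M) := mul_le_mul_of_nonneg_left hw hγ0
    have : V x - V y ≤ (r x a - r y a)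
        + γ * (∑ x', P x a x' * V x' - ∑ x', P y a x' * V x') := by
      rw [hVx]; nlinarith [hVy]
    nlinarith
  have hM0 : M ≤ 0 := by
    have hex : ∃ p : X × X, p ∈ (Finset.univ : Finset (X × X)) ∧
        (Finset.univ : Finset (X × X)).sup' Finset.univ_nonempty f = f p :=
      Finset.exists_mem_eq_sup' Finset.univ_nonempty f
    obtain ⟨p, _, hp⟩ := hex
    have h1 : V p.1 - V p.2 ≤ d p.1 p.2 + γ * M := key p.1 p.2
    have h2 : V p.2 - V p.1 ≤ d p.1 p.2 + γ * M := by
      have := key p.2 p.1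
      rw [hds p.2 p.1] at this
      exact this
    have habs : |V p.1 - V p.2| ≤ d p.1 p.2 + γ * M := abs_sub_le_iff.mpr ⟨h1, h2⟩
    have hMeq : M = |V p.1 - V p.2| - d p.1 p.2 := by rw [hMdef, hp]
    nlinarith
  have := hMb x₀ y₀
  linarith
end

section
/- For a fixed policy π, the π-bisimulation operator (T d)(x,y) = |r^π_x - r^π_y| + γ W_d(P^π_x, P^π_y) is pointwise dominated by the MICo operator T^π_M, and hence the π-bisimulation metric fixed point is pointwise less than or equal to the MICo distance U^π. -/
open Finset

lemma Wass_le_indep {X : Type*} [Fintype X]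
    (P : X → X → ℝ) (hP0 : ∀ x x', 0 ≤ P x x') (hP1 : ∀ x, ∑ x', P x x' = 1)
    (e : X → X → ℝ) (he0 : ∀ x y, 0 ≤ e x y) (x y : X) :
    Wass e (P x) (P y) ≤ ∑ x', ∑ y', P x x' * P y y' * e x' y' := by
  apply csInf_le
  · refine ⟨0, fun c hc => ?_⟩
    obtain ⟨κ, hκ0, -, -, rfl⟩ := hc
    exact Finset.sum_nonneg fun a _ => Finset.sum_nonneg fun b _ =>
      mul_nonneg (hκ0 a b) (he0 a b)
  · refine ⟨fun a b => P x a * P y b, fun a b => mul_nonneg (hP0 x a) (hP0 y b),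
      fun a => ?_, fun b => ?_, rfl⟩
    · rw [← Finset.mul_sum, hP1 y, mul_one]
    · rw [← Finset.sum_mul, hP1 x, one_mul]

/-- The π-bisimulation operator is pointwise dominated by the MICo operator, and the
π-bisimulation metric is pointwise at most the MICo distance U^π. -/
theorem pibisim_le_mico {X : Type*} [Fintype X]
    (γ : ℝ) (hγ0 : 0 ≤ γ) (hγ1 : γ < 1)
    (r : X → ℝ) (P : X → X → ℝ)
    (hP0 : ∀ x x', 0 ≤ P x x') (hP1 : ∀ x, ∑ x', P x x' = 1)
    (d U : X → X → ℝ)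
    (hd0 : ∀ x y, 0 ≤ d x y)
    (hdfix : ∀ x y, d x y = |r x - r y| + γ * Wass d (P x) (P y))
    (hUfix : ∀ x y, U x y = |r x - r y| + γ * ∑ x', ∑ y', P x x' * P y y' * U x' y') :
    (∀ e : X → X → ℝ, (∀ x y, 0 ≤ e x y) → ∀ x y : X,
      |r x - r y| + γ * Wass e (P x) (P y) ≤
        |r x - r y| + γ * ∑ x', ∑ y', P x x' * P y y' * e x' y') ∧
    (∀ x y : X, d x y ≤ U x y) := by
  constructor
  · intro e he0 x y
    have := Wass_le_indep P hP0 hP1 e he0 x y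
    nlinarith
  · cases isEmpty_or_nonempty X with
    | inl h => exact fun x => absurd trivial (fun _ => h.elim x)
    | inr h =>
      obtain ⟨⟨a, b⟩, -, hab⟩ := Finset.exists_max_image (Finset.univ : Finset (X × X))
        (fun p => d p.1 p.2 - U p.1 p.2) (Finset.univ_nonempty)
      set M := d a b - U a b with hM
      have hle : ∀ x y : X, d x y - U x y ≤ M := fun x y =>
        hab (x, y) (Finset.mem_univ _)
      have hWd := Wass_le_indep P hP0 hP1 d hd0 a b
      have hsum : ∑ x', ∑ y', P a x' * P b y' * d x' y'
          ≤ ∑ x', ∑ y', P a x' * P b y' * U x' y' + M := by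
        have h1 : ∑ x', ∑ y', P a x' * P b y' * (d x' y' - U x' y')
            ≤ ∑ x', ∑ y', P a x' * P b y' * M := by
          refine Finset.sum_le_sum fun x' _ => Finset.sum_le_sum fun y' _ => ?_
          exact mul_le_mul_of_nonneg_left (hle x' y')
            (mul_nonneg (hP0 a x') (hP0 b y'))
        have h2 : ∑ x', ∑ y', P a x' * P b y' * M = M := by
          simp_rw [mul_assoc, ← Finset.mul_sum, ← Finset.sum_mul, hP1 b, one_mul,
            hP1 a, one_mul]
        simp_rw [mul_sub] at h1
        rw [h2] at h1
        simp_rw [Finset.sum_sub_distrib] at h1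
        linarith
      have hMle : M ≤ γ * M := by
        have hda := hdfix a b
        have hUa := hUfix a b
        nlinarith
      have hM0 : M ≤ 0 := by nlinarith
      intro x y
      have := hle x y
      linarith
end
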